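/- Let Ω be an algebraic closure of the rational function field ℚ(t), and consider the Weierstrass curve E₈(t) over Ω. The subset of the group of points E₈(t)(Ω) consisting of the point at infinity O together with all affine points (x, y) whose x-coordinate satisfies x·(x + t²)·(x² − 4tx − 4t³) = 0 is a cyclic subgroup of order 8. In particular, there exists a point of E₈(t)(Ω) of exact order 8 whose x-coordinate is a root of x² − 4tx − 4t³. -/

import Mathlib

open WeierstrassCurve

/-- The Weierstrass curve `E₈(t) : y² + 4xy + 4t²y = x³ + t²x²`. -/
def E8 {F : Type*} [CommRing F] (t : F) : WeierstrassCurve F :=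
  ⟨4, t ^ 2, 4 * t ^ 2, 0, 0⟩

/-!
Let `r² = t + 1`. The point `P = (2t(1 + r), 2t²(1 + r))` lies on `E₈(t)`, and the chord-tangent
formulas give `2P = (0, 0)`, `4P = (-t², 0)`, `8P = O`, and `P + (0, 0) = -P'`, where `P'` is `P`
with `r` replaced by `-r`. Hence `P` has order 8, and the roots `0, -t², 2t(1 ± r)` of
`x(x + t²)(x² - 4tx - 4t³)` are the `x`-coordinates of `±2P, 4P, ±P, ±3P`, so the points over them
are exactly the multiples of `P`. Substituting `t = r² - 1` turns every coordinate identity into a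
polynomial identity in `r`. Over an algebraic closure of `ℚ(t)`, `t ∉ {0, -1}` and `√(t + 1)` exists.
-/

namespace WeierstrassCurve.Affine.Point

variable {F : Type*} [Field F] [DecidableEq F] {W : Affine F} {x₁ x₂ x₃ y₁ y₂ y₃ ℓ : F}

lemma some_mem_of_X_eq {H : AddSubgroup W.Point} {y y' : F}
    {h : W.Nonsingular x₁ y} {h' : W.Nonsingular x₁ y'} (hH : some _ _ h' ∈ H) :
    some _ _ h ∈ H := by
  rcases (X_eq_iff (h₁ := h) (h₂ := h')).1 rfl with e | e <;> rw [e]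
  exacts [hH, neg_mem hH]

lemma add_self_eq_some {h₁ : W.Nonsingular x₁ y₁} {h₃ : W.Nonsingular x₃ y₃}
    (hy : y₁ ≠ W.negY x₁ y₁)
    (hℓ : ℓ * (y₁ - W.negY x₁ y₁) = 3 * x₁ ^ 2 + 2 * W.a₂ * x₁ + W.a₄ - W.a₁ * y₁)
    (hx₃ : W.addX x₁ x₁ ℓ = x₃) (hy₃ : W.addY x₁ x₁ y₁ ℓ = y₃) :
    some _ _ h₁ + some _ _ h₁ = some _ _ h₃ := by
  have hslope : W.slope x₁ x₁ y₁ y₁ = ℓ := by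
    rw [slope_of_Y_ne rfl hy, div_eq_iff (sub_ne_zero.2 hy), hℓ]
  rw [add_self_of_Y_ne hy, some.injEq, hslope]
  exact ⟨hx₃, hy₃⟩

lemma add_eq_some_of_X_ne {h₁ : W.Nonsingular x₁ y₁} {h₂ : W.Nonsingular x₂ y₂}
    {h₃ : W.Nonsingular x₃ y₃} (hx : x₁ ≠ x₂) (hℓ : ℓ * (x₁ - x₂) = y₁ - y₂)
    (hx₃ : W.addX x₁ x₂ ℓ = x₃) (hy₃ : W.addY x₁ x₂ y₁ ℓ = y₃) :
    some _ _ h₁ + some _ _ h₂ = some _ _ h₃ := by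
  have hslope : W.slope x₁ x₂ y₁ y₂ = ℓ := by
    rw [slope_of_X_ne hx, div_eq_iff (sub_ne_zero.2 hx), hℓ]
  rw [add_of_X_ne hx, some.injEq, hslope]
  exact ⟨hx₃, hy₃⟩

end WeierstrassCurve.Affine.Point

lemma RatFunc.X_add_C_ne_zero {K : Type*} [Field K] (c : K) : (X + C c : RatFunc K) ≠ 0 := by
  rw [← algebraMap_X, ← algebraMap_C, ← map_add]
  exact algebraMap_ne_zero (Polynomial.X_add_C_ne_zero c)

namespace E8

open Affine

variable {F : Type*} [Field F] {t r : F}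

lemma equation_iff (x y : F) : (E8 t).toAffine.Equation x y ↔
    y ^ 2 + 4 * x * y + 4 * t ^ 2 * y = x ^ 3 + t ^ 2 * x ^ 2 := by
  simp only [Affine.equation_iff, E8]
  constructor <;> intro h <;> linear_combination h

lemma negY_eq (x y : F) : (E8 t).toAffine.negY x y = -y - 4 * x - 4 * t ^ 2 := rfl

lemma one_add_ne_zero (ht : t ≠ 0) (hr : r ^ 2 = t + 1) : 1 + r ≠ 0 :=
  fun h => ht (by linear_combination (r - 1) * h - hr)

lemma nonsingular_neg_sq_zero (ht : t ≠ 0) : (E8 t).toAffine.Nonsingular (-t ^ 2) 0 := by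
  refine (nonsingular_iff' _ _).2 ⟨(equation_iff _ _).2 (by ring), Or.inl ?_⟩
  simp only [E8]
  exact fun h => pow_ne_zero 4 ht (by linear_combination -h)

def point2 (ht : t ≠ 0) : (E8 t).toAffine.Point := .some _ _ (nonsingular_neg_sq_zero ht)

lemma two_nsmul_point2 [DecidableEq F] (ht : t ≠ 0) : 2 • point2 ht = 0 :=
  (two_nsmul _).trans (Point.add_self_of_Y_eq (by rw [negY_eq]; ring))

def kernelPoly (t x : F) : F := x * (x + t ^ 2) * (x ^ 2 - 4 * t * x - 4 * t ^ 3)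

def kernelSet (t : F) : Set (E8 t).toAffine.Point :=
  {P | P = 0 ∨ ∃ (x y : F) (h : (E8 t).toAffine.Nonsingular x y),
    P = .some _ _ h ∧ kernelPoly t x = 0}

lemma kernelPoly_eq_zero_iff (hr : r ^ 2 = t + 1) {x : F} : kernelPoly t x = 0 ↔
    x = 0 ∨ x = -t ^ 2 ∨ x = 2 * t * (1 + r) ∨ x = 2 * t * (1 + -r) := by
  have hfactor : kernelPoly t x =
      x * (x - -t ^ 2) * ((x - 2 * t * (1 + r)) * (x - 2 * t * (1 + -r))) := by
    unfold kernelPoly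
    linear_combination 4 * t ^ 2 * x * (x + t ^ 2) * hr
  simp only [hfactor, mul_eq_zero, sub_eq_zero, or_assoc]

lemma some_mem_kernelSet {x y : F} (h : (E8 t).toAffine.Nonsingular x y)
    (hx : kernelPoly t x = 0) : Point.some _ _ h ∈ kernelSet t :=
  Or.inr ⟨x, y, h, rfl, hx⟩

lemma neg_mem_kernelSet {P : (E8 t).toAffine.Point} (hP : P ∈ kernelSet t) :
    -P ∈ kernelSet t := by
  rcases hP with rfl | ⟨x, y, h, rfl, hx⟩
  exacts [Or.inl Point.neg_zero, some_mem_kernelSet _ hx]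

variable [NeZero (2 : F)]

lemma zero_ne_negY_zero (ht : t ≠ 0) : (0 : F) ≠ (E8 t).toAffine.negY 0 0 := by
  rw [negY_eq]
  exact fun h => pow_ne_zero 2 (mul_ne_zero two_ne_zero ht) (by linear_combination h)

lemma ne_negY_of_sq_eq (ht : t ≠ 0) (hr : r ^ 2 = t + 1) (hr0 : r ≠ 0) :
    2 * t ^ 2 * (1 + r) ≠ (E8 t).toAffine.negY (2 * t * (1 + r)) (2 * t ^ 2 * (1 + r)) := by
  have h1r := one_add_ne_zero ht hr
  obtain rfl := eq_sub_of_add_eq hr.symm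
  rw [negY_eq]
  have : 2 ^ 2 * (r ^ 2 - 1) * r * (1 + r) ^ 2 ≠ 0 :=
    mul_ne_zero (mul_ne_zero (mul_ne_zero (pow_ne_zero 2 two_ne_zero) ht) hr0) (pow_ne_zero 2 h1r)
  exact fun h => this (by linear_combination h)

lemma nonsingular_zero_zero (ht : t ≠ 0) : (E8 t).toAffine.Nonsingular 0 0 :=
  (nonsingular_iff _ _).2 ⟨(equation_iff _ _).2 (by ring), Or.inr (zero_ne_negY_zero ht)⟩

lemma nonsingular_of_sq_eq (ht : t ≠ 0) (hr : r ^ 2 = t + 1) (hr0 : r ≠ 0) :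
    (E8 t).toAffine.Nonsingular (2 * t * (1 + r)) (2 * t ^ 2 * (1 + r)) := by
  refine (nonsingular_iff _ _).2 ⟨(equation_iff _ _).2 ?_, Or.inr (ne_negY_of_sq_eq ht hr hr0)⟩
  obtain rfl := eq_sub_of_add_eq hr.symm
  ring

def point4 (ht : t ≠ 0) : (E8 t).toAffine.Point := .some _ _ (nonsingular_zero_zero ht)

def point8 (ht : t ≠ 0) (hr : r ^ 2 = t + 1) (hr0 : r ≠ 0) : (E8 t).toAffine.Point :=
  .some _ _ (nonsingular_of_sq_eq ht hr hr0)

variable [DecidableEq F]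

lemma two_nsmul_point4 (ht : t ≠ 0) : 2 • point4 ht = point2 ht := by
  rw [two_nsmul]
  refine Point.add_self_eq_some (ℓ := 0) (zero_ne_negY_zero ht) ?_ ?_ ?_ <;>
    simp only [E8, negY, addX, addY, negAddY] <;> ring

lemma two_nsmul_point8 (ht : t ≠ 0) (hr : r ^ 2 = t + 1) (hr0 : r ≠ 0) :
    2 • point8 ht hr hr0 = point4 ht := by
  rw [two_nsmul]
  refine Point.add_self_eq_some (ℓ := t - 2 + 2 * r) (ne_negY_of_sq_eq ht hr hr0) ?_ ?_ ?_ <;>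
    obtain rfl := eq_sub_of_add_eq hr.symm <;> simp only [E8, negY, addX, addY, negAddY] <;> ring

lemma point8_add_point4 (ht : t ≠ 0) (hr : r ^ 2 = t + 1) (hr0 : r ≠ 0)
    (hr' : (-r) ^ 2 = t + 1) (hr0' : -r ≠ 0) :
    point8 ht hr hr0 + point4 ht = -point8 ht hr' hr0' := by
  have hx : 2 * t * (1 + r) ≠ 0 :=
    mul_ne_zero (mul_ne_zero two_ne_zero ht) (one_add_ne_zero ht hr)
  refine Point.add_eq_some_of_X_ne (ℓ := t) hx (by ring) ?_ ?_ <;>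
    obtain rfl := eq_sub_of_add_eq hr.symm <;> simp only [E8, negY, addX, addY, negAddY] <;> ring

lemma three_nsmul_point8 (ht : t ≠ 0) (hr : r ^ 2 = t + 1) (hr0 : r ≠ 0)
    (hr' : (-r) ^ 2 = t + 1) (hr0' : -r ≠ 0) :
    3 • point8 ht hr hr0 = -point8 ht hr' hr0' := by
  rw [succ_nsmul, two_nsmul_point8, add_comm, point8_add_point4]

section

variable (ht : t ≠ 0) (hr : r ^ 2 = t + 1) (hr0 : r ≠ 0)

lemma four_nsmul_point8 : 4 • point8 ht hr hr0 = point2 ht := by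
  rw [show 4 = 2 * 2 from rfl, mul_nsmul, two_nsmul_point8, two_nsmul_point4]

lemma eight_nsmul_point8 : 8 • point8 ht hr hr0 = 0 := by
  rw [show 8 = 4 * 2 from rfl, mul_nsmul, four_nsmul_point8, two_nsmul_point2]

lemma addOrderOf_point8 : addOrderOf (point8 ht hr hr0) = 8 :=
  addOrderOf_eq_prime_pow (p := 2) (n := 2)
    (by rw [show 2 ^ 2 = 4 from rfl, four_nsmul_point8]; exact Point.some_ne_zero _)
    (eight_nsmul_point8 ht hr hr0)

lemma nsmul_point8_mem_kernelSet (m : ℕ) : m • point8 ht hr hr0 ∈ kernelSet t := by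
  set P := point8 ht hr hr0
  have hsmall : ∀ k ≤ 4, k • P ∈ kernelSet t := by
    intro k hk
    interval_cases k
    · exact Or.inl (zero_nsmul P)
    · rw [one_nsmul]
      exact some_mem_kernelSet _ ((kernelPoly_eq_zero_iff hr).2 (by simp))
    · rw [two_nsmul_point8]
      exact some_mem_kernelSet _ ((kernelPoly_eq_zero_iff hr).2 (by simp))
    · rw [three_nsmul_point8 ht hr hr0 (by rwa [neg_sq]) (neg_ne_zero.2 hr0)]
      exact neg_mem_kernelSet (some_mem_kernelSet _ ((kernelPoly_eq_zero_iff hr).2 (by simp)))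
    · rw [four_nsmul_point8]
      exact some_mem_kernelSet _ ((kernelPoly_eq_zero_iff hr).2 (by simp))
  have hneg : ∀ k : ℕ, k ≤ 8 → k • P = -((8 - k) • P : (E8 t).toAffine.Point) := fun k hk =>
    eq_neg_of_add_eq_zero_left (by rw [← add_nsmul, Nat.add_sub_cancel' hk, eight_nsmul_point8])
  rw [← Nat.mod_add_div m 8, add_nsmul, mul_nsmul, eight_nsmul_point8, nsmul_zero, add_zero]
  have hm := m.mod_lt (by norm_num : 8 > 0)
  rcases le_or_gt (m % 8) 4 with hle | hgt
  · exact hsmall _ hle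
  · rw [hneg _ hm.le]
    exact neg_mem_kernelSet (hsmall _ (by omega))

lemma zmultiples_point8_eq_kernelSet :
    (AddSubgroup.zmultiples (point8 ht hr hr0) : Set (E8 t).toAffine.Point) = kernelSet t := by
  set P := point8 ht hr hr0
  have hfin : IsOfFinAddOrder P := addOrderOf_pos_iff.1 (by rw [addOrderOf_point8]; norm_num)
  ext Q
  constructor
  · intro hQ
    obtain ⟨m, rfl⟩ :=
      (AddSubmonoid.mem_multiples_iff _ _).1 (hfin.mem_multiples_iff_mem_zmultiples.2 hQ)
    exact nsmul_point8_mem_kernelSet ht hr hr0 m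
  · rintro (rfl | ⟨x, y, h, rfl, hx⟩)
    · exact zero_mem _
    have hP := AddSubgroup.mem_zmultiples P
    rcases (kernelPoly_eq_zero_iff hr).1 hx with rfl | rfl | rfl | rfl
    · exact Point.some_mem_of_X_eq (two_nsmul_point8 ht hr hr0 ▸ nsmul_mem hP 2)
    · exact Point.some_mem_of_X_eq (four_nsmul_point8 ht hr hr0 ▸ nsmul_mem hP 4)
    · exact Point.some_mem_of_X_eq hP
    · have hQ := neg_mem (nsmul_mem hP 3)
      rw [three_nsmul_point8 ht hr hr0 (by rwa [neg_sq]) (neg_ne_zero.2 hr0), neg_neg] at hQ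
      exact Point.some_mem_of_X_eq hQ

end

end E8

open Classical in
/-- over an algebraic closure `Ω` of `ℚ(t)`, the set consisting of `O` together
with the affine points of `E₈(t)` whose `x`-coordinate satisfies
`x(x + t²)(x² - 4tx - 4t³) = 0` is a cyclic subgroup of order 8; in particular there is a point
of exact order 8 whose `x`-coordinate is a root of `x² - 4tx - 4t³`. -/
theorem stmt_4 :
    ∀ t : AlgebraicClosure (RatFunc ℚ),
      t = algebraMap (RatFunc ℚ) (AlgebraicClosure (RatFunc ℚ)) RatFunc.X →
    ∀ W : Affine (AlgebraicClosure (RatFunc ℚ)), W = (E8 t).toAffine →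
    ∀ S : Set W.Point,
      S = {P | P = 0 ∨ ∃ (x y : AlgebraicClosure (RatFunc ℚ)) (h : W.Nonsingular x y),
        P = Affine.Point.some _ _ h ∧
          x * (x + t ^ 2) * (x ^ 2 - 4 * t * x - 4 * t ^ 3) = 0} →
    (∃ H : AddSubgroup W.Point, (H : Set W.Point) = S ∧ IsAddCyclic H ∧ Nat.card H = 8) ∧
    ∃ (x y : AlgebraicClosure (RatFunc ℚ)) (h : W.Nonsingular x y),
      x ^ 2 - 4 * t * x - 4 * t ^ 3 = 0 ∧
      addOrderOf (Affine.Point.some _ _ h) = 8 ∧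
      (AddSubgroup.zmultiples (Affine.Point.some _ _ h) : Set W.Point) = S := by
  intro t ht W hW S hS
  subst hW hS
  have hX (c : ℚ) : t + algebraMap ℚ _ c ≠ 0 := by
    simpa [ht] using (map_ne_zero (algebraMap (RatFunc ℚ) (AlgebraicClosure (RatFunc ℚ)))).2
      (RatFunc.X_add_C_ne_zero c)
  have ht0 : t ≠ 0 := by simpa using hX 0
  obtain ⟨r, hr⟩ := IsAlgClosed.exists_pow_nat_eq (t + 1) two_pos
  have hr0 : r ≠ 0 := by
    rintro rfl
    exact hX 1 (by simpa [eq_comm] using hr)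
  have hC := E8.zmultiples_point8_eq_kernelSet ht0 hr hr0
  have hord := E8.addOrderOf_point8 ht0 hr hr0
  refine ⟨⟨_, hC, AddSubgroup.isAddCyclic_zmultiples _, by rw [Nat.card_zmultiples, hord]⟩,
    _, _, E8.nonsingular_of_sq_eq ht0 hr hr0, ?_, hord, hC⟩
  linear_combination 4 * t ^ 2 * hr
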